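/- Let K be a convex body in Euclidean n-space ℝⁿ with closedBall(0, r(K)) ⊆ K ⊆ closedBall(0,1), R(K) = 1, and w(K) = r(K) + 1. Then for every unit vector s ∈ ℝⁿ with −r(K)·s ∈ frontier(K), one has s ∈ K. -/

import Mathlib

open Metric Set
open scoped RealInnerProductSpace

/-- The diameter of a set. -/
noncomputable def sDiam {n : ℕ} (K : Set (EuclideanSpace ℝ (Fin n))) : ℝ :=
  Metric.diam K

/-- The circumradius: radius of the smallest enclosing closed ball. -/
noncomputable def circumradius {n : ℕ} (K : Set (EuclideanSpace ℝ (Fin n))) : ℝ :=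
  sInf {ρ : ℝ | 0 ≤ ρ ∧ ∃ c, K ⊆ Metric.closedBall c ρ}

/-- The inradius: radius of a largest inscribed closed ball. -/
noncomputable def inradius {n : ℕ} (K : Set (EuclideanSpace ℝ (Fin n))) : ℝ :=
  sSup {ρ : ℝ | 0 ≤ ρ ∧ ∃ c, Metric.closedBall c ρ ⊆ K}

/-- The (minimal) width: the smallest breadth over all directions. -/
noncomputable def width {n : ℕ} (K : Set (EuclideanSpace ℝ (Fin n))) : ℝ :=
  sInf {b : ℝ | ∃ u : EuclideanSpace ℝ (Fin n), ‖u‖ = 1 ∧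
    b = sSup ((fun x => (inner ℝ u x : ℝ)) '' K) - sInf ((fun x => (inner ℝ u x : ℝ)) '' K)}

/-!
Since `w(K) > 0`, `K` is full-dimensional, so `r(K) > 0` and `0` is an interior point. A supporting
hyperplane of `K` at the boundary point `-r s` cannot cut off the inscribed ball `B(0, r)`, so its
outer normal is `-s` and `K` lies in the half-space `⟪s, x⟫ ≥ -r`. The breadth of `K` in direction
`s` is at least `w(K) = r + 1`, so some `x ∈ K` has `⟪s, x⟫ ≥ 1`; as `‖x‖ ≤ 1`, this forces `x = s`.
-/

section InnerProductSpace

variable {E : Type*} [NormedAddCommGroup E] [InnerProductSpace ℝ E]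

/-- `width K` unfolds to the infimum of `breadth K u` over unit vectors `u`. -/
noncomputable def breadth (K : Set E) (u : E) : ℝ :=
  sSup ((fun x => ⟪u, x⟫) '' K) - sInf ((fun x => ⟪u, x⟫) '' K)

lemma isBounded_image_inner {K : Set E} (hK : Bornology.IsBounded K) (u : E) :
    Bornology.IsBounded ((fun x => ⟪u, x⟫) '' K) :=
  (innerSL ℝ u).lipschitz.isBounded_image hK

lemma breadth_nonneg {K : Set E} (hK : Bornology.IsBounded K) (u : E) : 0 ≤ breadth K u := by
  rcases K.eq_empty_or_nonempty with rfl | ⟨y, hy⟩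
  · simp [breadth]
  have hbdd := isBounded_image_inner hK u
  have hlow : sInf ((fun x => ⟪u, x⟫) '' K) ≤ ⟪u, y⟫ := csInf_le hbdd.bddBelow ⟨y, hy, rfl⟩
  have hupp : ⟪u, y⟫ ≤ sSup ((fun x => ⟪u, x⟫) '' K) := le_csSup hbdd.bddAbove ⟨y, hy, rfl⟩
  unfold breadth
  linarith

lemma breadth_eq_zero_of_inner_eq {K : Set E} {u x₀ : E} (hx₀ : x₀ ∈ K)
    (h : ∀ x ∈ K, ⟪u, x⟫ = ⟪u, x₀⟫) : breadth K u = 0 := by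
  have himage : (fun x => ⟪u, x⟫) '' K = {⟪u, x₀⟫} :=
    eq_singleton_iff_unique_mem.2 ⟨⟨x₀, hx₀, rfl⟩, by rintro _ ⟨x, hx, rfl⟩; exact h x hx⟩
  simp [breadth, himage]

lemma exists_add_le_inner_of_le_breadth {K : Set E} (hK : IsCompact K) (hne : K.Nonempty)
    {u : E} {a b : ℝ} (hb : b ≤ breadth K u) (ha : ∀ x ∈ K, a ≤ ⟪u, x⟫) :
    ∃ x ∈ K, b + a ≤ ⟪u, x⟫ := by
  have hcpt : IsCompact ((fun x => ⟪u, x⟫) '' K) :=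
    hK.image (continuous_const.inner continuous_id)
  obtain ⟨x, hx, hsup⟩ := hcpt.sSup_mem (hne.image _)
  have hinf : a ≤ sInf ((fun x => ⟪u, x⟫) '' K) :=
    le_csInf (hne.image _) (by rintro _ ⟨y, hy, rfl⟩; exact ha y hy)
  refine ⟨x, hx, ?_⟩
  unfold breadth at hb
  linarith

lemma exists_unit_inner_le_of_notMem_interior [CompleteSpace E] {K : Set E} (hK : Convex ℝ K)
    (hint : (interior K).Nonempty) {p : E} (hp : p ∉ interior K) :
    ∃ v : E, ‖v‖ = 1 ∧ ∀ x ∈ K, ⟪v, x⟫ ≤ ⟪v, p⟫ := by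
  obtain ⟨f, hf⟩ := geometric_hahn_banach_open_point hK.interior isOpen_interior hp
  set u := (InnerProductSpace.toDual ℝ E).symm f
  have hfu : ∀ x, ⟪u, x⟫ = f x := fun x => InnerProductSpace.toDual_symm_apply
  have hKu : ∀ x ∈ K, ⟪u, x⟫ ≤ ⟪u, p⟫ := by
    have hclosed : IsClosed {x | ⟪u, x⟫ ≤ ⟪u, p⟫} :=
      isClosed_le (continuous_const.inner continuous_id) continuous_const
    have hsub : closure (interior K) ⊆ {x | ⟪u, x⟫ ≤ ⟪u, p⟫} :=
      hclosed.closure_subset_iff.2 fun x hx => by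
        show ⟪u, x⟫ ≤ ⟪u, p⟫
        rw [hfu, hfu]
        exact (hf x hx).le
    rw [hK.closure_interior_eq_closure_of_nonempty_interior hint] at hsub
    exact fun x hx => hsub (subset_closure hx)
  have hu : u ≠ 0 := by
    rintro hu
    obtain ⟨x, hx⟩ := hint
    simpa [← hfu, hu] using hf x hx
  refine ⟨‖u‖⁻¹ • u, norm_smul_inv_norm hu, fun x hx => ?_⟩
  simp only [real_inner_smul_left]
  exact mul_le_mul_of_nonneg_left (hKu x hx) (inv_nonneg.2 (norm_nonneg u))

lemma exists_unit_inner_eq_of_interior_eq_empty [FiniteDimensional ℝ E] {K : Set E}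
    (hK : Convex ℝ K) (hint : interior K = ∅) {x₀ : E} (hx₀ : x₀ ∈ K) :
    ∃ u : E, ‖u‖ = 1 ∧ ∀ x ∈ K, ⟪u, x⟫ = ⟪u, x₀⟫ := by
  have hspan : affineSpan ℝ K ≠ ⊤ := fun h => by
    simpa [hint] using hK.interior_nonempty_iff_affineSpan_eq_top.2 h
  have hdir : (affineSpan ℝ K).direction ≠ ⊤ := fun h =>
    hspan ((AffineSubspace.direction_eq_top_iff_of_nonempty ⟨x₀, subset_affineSpan ℝ K hx₀⟩).1 h)
  obtain ⟨u, hu, hu0⟩ := Submodule.exists_mem_ne_zero_of_ne_bot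
    fun h => hdir (Submodule.orthogonal_eq_bot_iff.1 h)
  refine ⟨‖u‖⁻¹ • u, norm_smul_inv_norm hu0, fun x hx => ?_⟩
  have hperp := (Submodule.mem_orthogonal' _ _).1 hu (x - x₀)
    (AffineSubspace.vsub_mem_direction (subset_affineSpan ℝ K hx) (subset_affineSpan ℝ K hx₀))
  rw [inner_sub_right, sub_eq_zero] at hperp
  simp only [real_inner_smul_left, hperp]

lemma eq_neg_of_inner_le_inner_neg_smul {K : Set E} {r : ℝ} (hr : 0 < r)
    (hball : closedBall 0 r ⊆ K) {v s : E} (hv : ‖v‖ = 1) (hs : ‖s‖ = 1)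
    (hvK : ∀ x ∈ K, ⟪v, x⟫ ≤ ⟪v, -r • s⟫) : v = -s := by
  have hrv : r • v ∈ K := hball (by simp [norm_smul, hv, abs_of_pos hr])
  have h := hvK _ hrv
  rw [real_inner_smul_right, real_inner_smul_right, real_inner_self_eq_norm_sq, hv] at h
  have hle : ⟪v, s⟫ ≤ -1 := by nlinarith
  have hge : -1 ≤ ⟪v, s⟫ := by
    simpa [hv, hs] using neg_le_of_abs_le (abs_real_inner_le_norm v s)
  exact (inner_eq_neg_one_iff_of_norm_eq_one hv hs).1 (le_antisymm hle hge)

lemma eq_of_norm_le_one_of_one_le_inner {s x : E} (hs : ‖s‖ = 1) (hx : ‖x‖ ≤ 1)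
    (h : 1 ≤ ⟪s, x⟫) : x = s := by
  have hcs : ⟪s, x⟫ ≤ ‖x‖ := by simpa [hs] using real_inner_le_norm s x
  have hx1 : ‖x‖ = 1 := le_antisymm hx (h.trans hcs)
  exact ((inner_eq_one_iff_of_norm_eq_one hs hx1).1 (le_antisymm (hcs.trans hx1.le) h)).symm

end InnerProductSpace

section EuclideanSpace

variable {n : ℕ} {K : Set (EuclideanSpace ℝ (Fin n))}

lemma width_le_breadth (hK : Bornology.IsBounded K) {u : EuclideanSpace ℝ (Fin n)}
    (hu : ‖u‖ = 1) : width K ≤ breadth K u :=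
  csInf_le ⟨0, by rintro _ ⟨v, -, rfl⟩; exact breadth_nonneg hK v⟩ ⟨u, hu, rfl⟩

lemma interior_nonempty_of_width_pos (hK : Bornology.IsBounded K) (hcv : Convex ℝ K)
    (hne : K.Nonempty) (hw : 0 < width K) : (interior K).Nonempty := by
  rw [nonempty_iff_ne_empty]
  intro hint
  obtain ⟨x₀, hx₀⟩ := hne
  obtain ⟨u, hu, hconst⟩ := exists_unit_inner_eq_of_interior_eq_empty hcv hint hx₀
  have := width_le_breadth hK hu
  rw [breadth_eq_zero_of_inner_eq hx₀ hconst] at this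
  linarith

lemma inradius_nonneg (K : Set (EuclideanSpace ℝ (Fin n))) : 0 ≤ inradius K :=
  Real.sSup_nonneg fun _ hρ => hρ.1

lemma le_inradius_of_closedBall_subset [Nontrivial (EuclideanSpace ℝ (Fin n))]
    (hK : Bornology.IsBounded K) {c : EuclideanSpace ℝ (Fin n)} {ρ : ℝ} (hρ : 0 ≤ ρ)
    (hc : closedBall c ρ ⊆ K) : ρ ≤ inradius K := by
  refine le_csSup ⟨diam K, ?_⟩ ⟨hρ, c, hc⟩
  rintro σ ⟨hσ, d, hd⟩
  have := diam_mono hd hK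
  rw [diam_closedBall_eq d hσ] at this
  linarith

lemma inradius_pos_of_interior_nonempty [Nontrivial (EuclideanSpace ℝ (Fin n))]
    (hK : Bornology.IsBounded K) (hint : (interior K).Nonempty) : 0 < inradius K := by
  obtain ⟨x, hx⟩ := hint
  obtain ⟨ε, hε, hball⟩ := Metric.isOpen_iff.1 isOpen_interior x hx
  have hsub : closedBall x (ε / 2) ⊆ K := fun y hy =>
    interior_subset (hball (closedBall_subset_ball (half_lt_self hε) hy))
  exact (half_pos hε).trans_le (le_inradius_of_closedBall_subset hK (half_pos hε).le hsub)

end EuclideanSpace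

theorem boundary_point_of_inball_general (n : ℕ) (K : Set (EuclideanSpace ℝ (Fin n)))
    (hcp : IsCompact K) (hcv : Convex ℝ K)
    (hball : Metric.closedBall (0 : EuclideanSpace ℝ (Fin n)) (inradius K) ⊆ K)
    (hsub : K ⊆ Metric.closedBall 0 1)
    (hw : width K = inradius K + 1)
    (s : EuclideanSpace ℝ (Fin n)) (hs : ‖s‖ = 1)
    (hfr : -(inradius K) • s ∈ frontier K) : s ∈ K := by
  have : Nontrivial (EuclideanSpace ℝ (Fin n)) := nontrivial_of_ne s 0 (by rintro rfl; simp at hs)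
  have hr0 := inradius_nonneg K
  have hne : K.Nonempty := ⟨0, hball (mem_closedBall_self hr0)⟩
  have hr : 0 < inradius K := inradius_pos_of_interior_nonempty hcp.isBounded
    (interior_nonempty_of_width_pos hcp.isBounded hcv hne (by linarith))
  have h0 : (0 : EuclideanSpace ℝ (Fin n)) ∈ interior K :=
    interior_mono hball (by rw [interior_closedBall _ hr.ne']; exact mem_ball_self hr)
  obtain ⟨v, hv, hvK⟩ := exists_unit_inner_le_of_notMem_interior hcv ⟨0, h0⟩ hfr.2
  obtain rfl : v = -s := eq_neg_of_inner_le_inner_neg_smul hr hball hv hs hvK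
  have hlow : ∀ x ∈ K, -inradius K ≤ ⟪s, x⟫ := fun x hx =>
    neg_le.1 (by simpa [inner_smul_right, real_inner_self_eq_norm_sq, hs] using hvK x hx)
  obtain ⟨x, hxK, hx⟩ := exists_add_le_inner_of_le_breadth hcp hne
    (width_le_breadth hcp.isBounded hs) hlow
  obtain rfl : x = s :=
    eq_of_norm_le_one_of_one_le_inner hs (by simpa using hsub hxK) (by linarith)
  exact hxK

theorem boundary_point_of_inball (n : ℕ) (K : Set (EuclideanSpace ℝ (Fin n)))
    (hne : K.Nonempty) (hcp : IsCompact K) (hcv : Convex ℝ K)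
    (hball : Metric.closedBall (0 : EuclideanSpace ℝ (Fin n)) (inradius K) ⊆ K)
    (hsub : K ⊆ Metric.closedBall 0 1)
    (hR : circumradius K = 1) (hw : width K = inradius K + 1)
    (s : EuclideanSpace ℝ (Fin n)) (hs : ‖s‖ = 1)
    (hfr : -(inradius K) • s ∈ frontier K) : s ∈ K :=
  boundary_point_of_inball_general n K hcp hcv hball hsub hw s hs hfr
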